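/- arXiv:1906.08371 — 2 statements merged into one kernel-verified Lean document; each statement's English description precedes it below -/
import Mathlib

section
/- If H is a subgraph of a finite graph G, G → H, and H is a core, then H is an induced subgraph of G. -/
namespace SimpleGraph

variable {V : Type*} {G : SimpleGraph V}

lemma Hom.adj_iterate (f : G →g G) {a b : V} (h : G.Adj a b) (n : ℕ) :
    G.Adj (f^[n] a) (f^[n] b) := by
  induction n with
  | zero => exact h
  | succ n ih => simpa only [Function.iterate_succ_apply'] using f.map_adj ih

/-- The inverse of `f` is an iterate of `f`, hence again a homomorphism. -/
lemma Hom.adj_of_adj_apply [Finite V] (f : G →g G) (hf : Function.Injective f) {a b : V}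
    (h : G.Adj (f a) (f b)) : G.Adj a b := by
  have : Fintype V := Fintype.ofFinite V
  obtain ⟨k, hk⟩ := Nat.exists_eq_add_one_of_ne_zero (Fintype.card V).factorial_ne_zero
  have hid : f^[k + 1] = id := hk ▸ Function.injective_iff_iterate_factorial_card_eq_id.mp hf
  have hadj := f.adj_iterate h k
  rwa [← Function.iterate_succ_apply, hid, ← Function.iterate_succ_apply, hid] at hadj

end SimpleGraph

/-- If `H` is a subgraph of a finite graph `G`, `G → H`, and `H` is a
core, then `H` is an induced subgraph of `G`. -/
theorem core_subgraph_isInduced {V : Type*} [Fintype V] (G : SimpleGraph V)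
    (H : G.Subgraph) (hcore : ∀ f : H.coe →g H.coe, Function.Bijective f)
    (hom : G →g H.coe) : H.IsInduced := by
  intro u hu v hv huv
  let φ : H.coe →g H.coe := hom.comp H.hom
  exact φ.adj_of_adj_apply (a := ⟨u, hu⟩) (b := ⟨v, hv⟩) (hcore φ).injective (hom.map_adj huv)
end

section
/- If H is a projective core on vertex set V(H) and f : H^m → H is any homomorphism (m ≥ 2), then f = g ∘ π_i for some coordinate projection π_i and some automorphism g of H. -/
/-- The `m`-fold direct power of a graph `H`: vertices are `m`-tuples, adjacent iff
adjacent in every coordinate. -/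
def graphPow {α : Type*} (H : SimpleGraph α) (m : ℕ) (hm : 0 < m) :
    SimpleGraph (Fin m → α) where
  Adj a b := ∀ i, H.Adj (a i) (b i)
  symm := ⟨fun _ _ h i => (h i).symm⟩
  loopless := ⟨fun a h => H.loopless.irrefl (a ⟨0, hm⟩) (h ⟨0, hm⟩)⟩

/-!
Composing `f` with the diagonal embedding `H → H^m` gives an endomorphism of `H`, which is an
automorphism `g` because `H` is a core. Then `g⁻¹ ∘ f` is idempotent, hence a projection `π i`
because `H` is projective, and `f = g ∘ π i`.
-/

namespace SimpleGraph

variable {V : Type*} [Finite V] {G : SimpleGraph V}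

/-- On a finite graph an injective endomorphism permutes the finitely many edges, so it also
reflects adjacency. -/
theorem Hom.adj_of_adj_map_of_injective (f : G →g G) (hf : Function.Injective f) {a b : V}
    (h : G.Adj (f a) (f b)) : G.Adj a b := by
  obtain ⟨⟨e, he⟩, hfe⟩ :=
    Finite.injective_iff_surjective.mp (Hom.mapEdgeSet.injective f hf) ⟨s(f a, f b), h⟩
  induction e using Sym2.ind with
  | _ x y =>
    have hxy : s(f x, f y) = s(f a, f b) := congrArg Subtype.val hfe
    rcases Sym2.eq_iff.mp hxy with ⟨hx, hy⟩ | ⟨hx, hy⟩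
    · rwa [← hf hx, ← hf hy]
    · rw [← hf hx, ← hf hy]
      exact he.symm

noncomputable def Hom.autOfBijective (f : G →g G) (hf : Function.Bijective f) : G ≃g G where
  toEquiv := Equiv.ofBijective f hf
  map_rel_iff' := ⟨f.adj_of_adj_map_of_injective hf.injective, f.map_adj⟩

end SimpleGraph

def graphPow.diag {α : Type*} (H : SimpleGraph α) (m : ℕ) (hm : 0 < m) :
    H →g graphPow H m hm where
  toFun x _ := x
  map_rel' h _ := h

/-- If `H` is a projective core and `f : H^m → H` is any homomorphism
(`m ≥ 2`), then `f = g ∘ π i` for some coordinate projection `π i` and some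
automorphism `g` of `H`. -/
theorem hom_from_power_of_projective_core {α : Type*} [Fintype α] (H : SimpleGraph α)
    (hcore : ∀ f : H →g H, Function.Bijective f)
    (hproj : ∀ (m : ℕ) (hm : 2 ≤ m)
      (f : graphPow H m (by omega) →g H),
      (∀ x : α, f (fun _ => x) = x) → ∃ i : Fin m, ∀ a, f a = a i)
    (m : ℕ) (hm : 2 ≤ m) (f : graphPow H m (by omega) →g H) :
    ∃ (i : Fin m) (g : H ≃g H), ∀ a, f a = g (a i) := by
  let e : H →g H := f.comp (graphPow.diag H m (by omega))
  let g : H ≃g H := e.autOfBijective (hcore e)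
  have hidem : ∀ x : α, (g.symm.toHom.comp f) (fun _ => x) = x := fun x =>
    g.symm_apply_apply x
  obtain ⟨i, hi⟩ := hproj m hm (g.symm.toHom.comp f) hidem
  refine ⟨i, g, fun a => ?_⟩
  rw [← hi a]
  exact (g.apply_symm_apply (f a)).symm
end
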